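/- In the differential polynomial algebra, for all f, g ∈ 𝒜 the Leibniz-type identity holds: p_{i,α,s}(f·g) = Σ_{t≥0} (−1)^t C(t+s,s) ( p_{i,α,s+t}(f)·∂^t(g) + ∂^t(f)·p_{i,α,s+t}(g) ). -/

import Mathlib

open MvPolynomial

/-- The differential polynomial algebra `𝒜` in the variables `u^{i,s}`,
`1 ≤ i ≤ n`, `s ≥ 0`. -/
abbrev DP (n : ℕ) : Type := MvPolynomial (Fin n × ℕ) ℝ

/-- The total derivative `∂ = Σ u^{i,s+1} ∂_{i,s}` (on each differential
polynomial only finitely many terms act nontrivially). -/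
noncomputable def totalDer {n : ℕ} (f : DP n) : DP n :=
  ∑ v ∈ f.vars, X (v.1, v.2 + 1) * pderiv v f

/-- A bound such that `∂_{i,k} f = 0` for all `k ≥ vbound f`. -/
noncomputable def vbound {n : ℕ} (f : DP n) : ℕ := (f.vars.sup (fun v => v.2)) + 1

/-- The higher generalized momentum operator
`p_{i,α,s} = Σ_{t≥0} (-1)^t C(t+s,s) ∂^t ∘ ∂_{i,α+s+t}`; the sum is finite on each
differential polynomial, and is truncated at a sufficiently large bound. -/
noncomputable def pmom {n : ℕ} (i : Fin n) (α s : ℕ) (f : DP n) : DP n :=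
  ∑ t ∈ Finset.range (vbound f),
    ((-1 : ℝ) ^ t * (Nat.choose (t + s) s : ℝ)) • totalDer^[t] (pderiv (i, α + s + t) f)

/-- The higher energy operator `E_s = Σ_{α≥1} u^{i,α} p_{i,α,s}`. -/
noncomputable def Eop {n : ℕ} (s : ℕ) (f : DP n) : DP n :=
  ∑ i : Fin n, ∑ α ∈ Finset.Icc 1 (vbound f), X (i, α) * pmom i α s f

/-- The energy operator `E = E₀ - 1`. -/
noncomputable def Ener {n : ℕ} (f : DP n) : DP n := Eop 0 f - f

/-!
Write `c t s = (-1)^t C(t+s,s)`. Expanding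
`p_{i,α,s}(f g) = Σ_m c m s ∂^m (∂_{i,α+s+m}(f) g + f ∂_{i,α+s+m}(g))`
with the general Leibniz rule for the derivation `∂` produces the terms
`c (r+t) s C(r+t,r) ∂^r ∂_{i,α+s+t+r}(f) ∂^t(g)`, and `c (r+t) s C(r+t,r) = c t s · c r (s+t)`.
Regrouping by `t`, the inner sum over `r` is exactly `p_{i,α,s+t}(f)`. All sums are finite because
`∂_{i,k} f = 0` once `k ≥ vbound f`.
-/

open Finset

theorem Derivation.iterate_apply_mul {R A : Type*} [CommSemiring R] [CommSemiring A] [Algebra R A]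
    (D : Derivation R A A) (m : ℕ) (a b : A) :
    D^[m] (a * b) = ∑ ij ∈ antidiagonal m, m.choose ij.1 • (D^[ij.1] a * D^[ij.2] b) := by
  induction m with
  | zero => simp
  | succ m ih =>
    rw [sum_antidiagonal_choose_succ_nsmul (fun i j => D^[i] a * D^[j] b) m]
    simp only [Function.iterate_succ_apply', ih, map_sum, map_nsmul, leibniz, smul_eq_mul,
      smul_add, sum_add_distrib]
    congr 1
    refine sum_congr rfl fun ⟨i, j⟩ hij => ?_
    rw [m.choose_symm_of_eq_add (HasAntidiagonal.mem_antidiagonal.1 hij).symm, mul_comm]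

theorem Finset.sum_range_sum_antidiagonal_eq_sum_range_sum_range {M : Type*} [AddCommMonoid M]
    (N : ℕ) (F : ℕ → ℕ → M) (hF : ∀ a b, N ≤ a + b → F a b = 0) :
    ∑ m ∈ range N, ∑ ij ∈ antidiagonal m, F ij.1 ij.2 = ∑ a ∈ range N, ∑ b ∈ range N, F a b := by
  set T := (range N ×ˢ range N).filter fun ij => ij.1 + ij.2 < N
  have hfiber : ∀ m ∈ range N, antidiagonal m = T.filter fun ij => ij.1 + ij.2 = m := by
    intro m hm
    ext ⟨a, b⟩
    simp only [mem_range] at hm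
    simp only [HasAntidiagonal.mem_antidiagonal, mem_filter, mem_product, mem_range, T]
    omega
  rw [sum_congr rfl fun m hm => by rw [hfiber m hm], sum_fiberwise_of_maps_to
    (fun ij hij => by simpa [T] using (mem_filter.1 hij).2), ← sum_product']
  exact sum_filter_of_ne fun ij _ hF0 => by by_contra h; exact hF0 (hF _ _ (by omega))

variable {n : ℕ}

theorem totalDer_eq_sum_of_vars_subset {f : DP n} {S : Finset (Fin n × ℕ)} (hS : f.vars ⊆ S) :
    totalDer f = ∑ v ∈ S, X (v.1, v.2 + 1) * pderiv v f :=
  sum_subset hS fun v _ hv => by rw [pderiv_eq_zero_of_notMem_vars hv, mul_zero]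

theorem totalDer_add (f g : DP n) : totalDer (f + g) = totalDer f + totalDer g := by
  rw [totalDer_eq_sum_of_vars_subset (vars_add_subset f g),
    totalDer_eq_sum_of_vars_subset subset_union_left,
    totalDer_eq_sum_of_vars_subset subset_union_right, ← sum_add_distrib]
  exact sum_congr rfl fun v _ => by rw [map_add, mul_add]

theorem totalDer_mul (f g : DP n) : totalDer (f * g) = f * totalDer g + g * totalDer f := by
  rw [totalDer_eq_sum_of_vars_subset (vars_mul f g),
    totalDer_eq_sum_of_vars_subset (f := f) subset_union_left,
    totalDer_eq_sum_of_vars_subset (f := g) subset_union_right, mul_sum, mul_sum,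
    ← sum_add_distrib]
  exact sum_congr rfl fun v _ => by rw [pderiv_mul]; ring

theorem totalDer_smul (c : ℝ) (f : DP n) : totalDer (c • f) = c • totalDer f := by
  have h_C : totalDer (C c : DP n) = 0 := by simp [totalDer, vars_C]
  rw [smul_eq_C_mul, totalDer_mul, h_C, mul_zero, add_zero, smul_eq_C_mul]

noncomputable def totalDerivation : Derivation ℝ (DP n) (DP n) :=
  Derivation.mk' ⟨⟨totalDer, totalDer_add⟩, totalDer_smul⟩ totalDer_mul

theorem coe_totalDerivation : ⇑(totalDerivation : Derivation ℝ (DP n) (DP n)) = totalDer :=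
  rfl

theorem pderiv_eq_zero_of_vbound_le {f : DP n} {k : ℕ} (hk : vbound f ≤ k) (i : Fin n) :
    pderiv (i, k) f = 0 := by
  refine pderiv_eq_zero_of_notMem_vars fun h => ?_
  have := le_sup (f := fun v : Fin n × ℕ => v.2) h
  simp only [vbound] at hk this
  omega

theorem vbound_mul_le (f g : DP n) : vbound (f * g) ≤ vbound f + vbound g := by
  have := sup_mono (f := fun v : Fin n × ℕ => v.2) (vars_mul f g)
  rw [sup_union] at this
  simp only [vbound]
  omega

theorem iterate_totalDer_zero (t : ℕ) : totalDer^[t] (0 : DP n) = 0 :=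
  iterate_map_zero totalDerivation t

theorem iterate_totalDer_add (t : ℕ) (f g : DP n) :
    totalDer^[t] (f + g) = totalDer^[t] f + totalDer^[t] g :=
  iterate_map_add totalDerivation t f g

noncomputable def momentCoeff (t s : ℕ) : ℝ := (-1) ^ t * ((t + s).choose s : ℝ)

/-- Both sides are `(-1)^(r+t)` times the multinomial coefficient `(r+t+s)! / (r! t! s!)`. -/
theorem momentCoeff_add_mul_choose (s r t : ℕ) :
    momentCoeff (r + t) s * (r + t).choose r = momentCoeff t s * momentCoeff r (s + t) := by
  have h := Nat.choose_mul (n := r + t + s) (k := t + s) (s := s) (by omega)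
  rw [show r + t + s - s = r + t by omega, show t + s - s = t by omega,
    ← Nat.choose_symm_add (a := r)] at h
  have h' : ((r + t + s).choose s * (r + t).choose r : ℝ) =
      (t + s).choose s * (r + (s + t)).choose (s + t) := by
    rw [show r + (s + t) = r + t + s by omega, add_comm s t]
    exact_mod_cast (h.symm.trans (mul_comm _ _))
  simp only [momentCoeff, pow_add]
  linear_combination (-1 : ℝ) ^ r * (-1 : ℝ) ^ t * h'

theorem pmom_eq_sum_range {f : DP n} {N : ℕ} (hN : vbound f ≤ N) (i : Fin n) (α s : ℕ) :
    pmom i α s f =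
      ∑ t ∈ range N, momentCoeff t s • totalDer^[t] (pderiv (i, α + s + t) f) :=
  sum_subset (range_subset_range.2 hN) fun t _ ht => by
    rw [pderiv_eq_zero_of_vbound_le (by simp only [mem_range, not_lt] at ht; omega),
      iterate_totalDer_zero, smul_zero]

theorem sum_momentCoeff_iterate_totalDer_pderiv_mul {f : DP n} {N : ℕ} (hN : vbound f ≤ N)
    (i : Fin n) (α s : ℕ) (g : DP n) :
    ∑ m ∈ range N, momentCoeff m s • totalDer^[m] (pderiv (i, α + s + m) f * g) =
      ∑ t ∈ range N, momentCoeff t s • (pmom i α (s + t) f * totalDer^[t] g) := by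
  set F : ℕ → ℕ → DP n := fun r t => (momentCoeff t s * momentCoeff r (s + t)) •
    (totalDer^[r] (pderiv (i, α + (s + t) + r) f) * totalDer^[t] g)
  have h_leibniz : ∀ m, momentCoeff m s • totalDer^[m] (pderiv (i, α + s + m) f * g) =
      ∑ rt ∈ antidiagonal m, F rt.1 rt.2 := by
    intro m
    rw [← coe_totalDerivation, Derivation.iterate_apply_mul, smul_sum]
    refine sum_congr rfl fun ⟨r, t⟩ h => ?_
    obtain rfl : r + t = m := HasAntidiagonal.mem_antidiagonal.1 h
    rw [← Nat.cast_smul_eq_nsmul ℝ, smul_smul, momentCoeff_add_mul_choose,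
      show α + s + (r + t) = α + (s + t) + r by omega]
    rfl
  have h_vanish : ∀ r t, N ≤ r + t → F r t = 0 := fun r t h => by
    simp only [F, pderiv_eq_zero_of_vbound_le (by omega : vbound f ≤ α + (s + t) + r),
      iterate_totalDer_zero, zero_mul, smul_zero]
  calc _ = ∑ m ∈ range N, ∑ rt ∈ antidiagonal m, F rt.1 rt.2 := sum_congr rfl fun m _ =>
        h_leibniz m
    _ = ∑ r ∈ range N, ∑ t ∈ range N, F r t :=
      sum_range_sum_antidiagonal_eq_sum_range_sum_range N F h_vanish
    _ = ∑ t ∈ range N, ∑ r ∈ range N, F r t := sum_comm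
    _ = _ := sum_congr rfl fun t _ => by
      rw [pmom_eq_sum_range hN, sum_mul, smul_sum]
      exact sum_congr rfl fun r _ => by rw [smul_mul_assoc, smul_smul]

/-- Leibniz-type identity for the higher generalized momentum operators:
`p_{i,α,s}(f·g) = Σ_t (-1)^t C(t+s,s) ( p_{i,α,s+t}(f)·∂^t(g) + ∂^t(f)·p_{i,α,s+t}(g) )`
(the sum is finite; it is truncated at a sufficiently large bound). -/
theorem stmt17 {n : ℕ} (i : Fin n) (α s : ℕ) (f g : DP n) :
    pmom i α s (f * g) =
      ∑ t ∈ Finset.range (vbound f + vbound g),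
        ((-1 : ℝ) ^ t * (Nat.choose (t + s) s : ℝ)) •
          (pmom i α (s + t) f * totalDer^[t] g + totalDer^[t] f * pmom i α (s + t) g) := by
  set N := vbound f + vbound g
  calc pmom i α s (f * g)
      = ∑ m ∈ range N, momentCoeff m s • totalDer^[m] (pderiv (i, α + s + m) f * g) +
          ∑ m ∈ range N, momentCoeff m s • totalDer^[m] (pderiv (i, α + s + m) g * f) := by
        rw [pmom_eq_sum_range (vbound_mul_le f g), ← sum_add_distrib]
        exact sum_congr rfl fun m _ => by
          rw [pderiv_mul, iterate_totalDer_add, smul_add, mul_comm f]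
    _ = ∑ t ∈ range N, momentCoeff t s • (pmom i α (s + t) f * totalDer^[t] g) +
          ∑ t ∈ range N, momentCoeff t s • (pmom i α (s + t) g * totalDer^[t] f) := by
        rw [sum_momentCoeff_iterate_totalDer_pderiv_mul (le_add_right le_rfl),
          sum_momentCoeff_iterate_totalDer_pderiv_mul (le_add_left le_rfl)]
    _ = _ := by
        rw [← sum_add_distrib]
        exact sum_congr rfl fun t _ => by rw [mul_comm (pmom i α (s + t) g), ← smul_add]; rfl
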